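/- Let L be an orthomodular lattice. For elements a, b, c, d, e of L define t₁ = c ∪ ((a ∪ d ∪ e) ∩ (b ∪ c)), t₂ = d ∪ ((a ∪ c ∪ e) ∩ (b ∪ d)), and t₃ = e ∪ ((a ∪ c ∪ d) ∩ (b ∪ e)). Then the following two conditions on L are equivalent: (i) for all a, b, c, d, e with a ⊥ b, c ⊥ d, d ⊥ e, and c ⊥ e, one has (a ∪ b) ∩ (c ∪ d ∪ e) ≤ a ∪ (b ∩ t₃ ∩ t₂ ∩ t₁); (ii) for all a, b, c, d with a ⊥ b and c ⊥ d, one has (a ∪ b) ∩ (c ∪ d) ≤ a ∪ (b ∩ (c ∪ ((a ∪ d) ∩ (b ∪ c)))) (the 3OA law in four-variable form). -/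
import Mathlib


/-- An ortholattice: a bounded lattice with an orthocomplementation. -/
class Ortholattice (α : Type*) extends Lattice α, BoundedOrder α where
  ocompl : α → α
  sup_ocompl : ∀ a : α, a ⊔ ocompl a = ⊤
  inf_ocompl : ∀ a : α, a ⊓ ocompl a = ⊥
  ocompl_anti : ∀ a b : α, a ≤ b → ocompl b ≤ ocompl a
  ocompl_ocompl : ∀ a : α, ocompl (ocompl a) = a

postfix:max "ᗮ" => Ortholattice.ocompl

/-- An orthomodular lattice. -/
class OrthomodularLattice (α : Type*) extends Ortholattice α where
  orthomodular : ∀ a b : α, a ≤ b → b = a ⊔ (aᗮ ⊓ b)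

/-- The Sasaki hook `x → y = x′ ∪ (x ∩ y)`. -/
def oimp {α : Type*} [Ortholattice α] (x y : α) : α := xᗮ ⊔ (x ⊓ y)

section Aux
variable {α : Type*} [OrthomodularLattice α]

open Ortholattice OrthomodularLattice

lemma ortho_symm {a b : α} (h : a ≤ bᗮ) : b ≤ aᗮ := by
  have := ocompl_anti a bᗮ h
  rwa [ocompl_ocompl] at this

lemma ocompl_bot : (⊥ : α)ᗮ = ⊤ := by
  have := sup_ocompl (⊥ : α)
  rwa [bot_sup_eq] at this

lemma le_ocompl_of_le_ocompl {a x : α} (h : x ≤ aᗮ) : a ≤ xᗮ := ortho_symm h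

lemma inf_compl_sup_eq {a x : α} (h : x ≤ aᗮ) : aᗮ ⊓ (a ⊔ x) = x := by
  have hx : x ≤ aᗮ ⊓ (a ⊔ x) := le_inf h le_sup_right
  have hom := orthomodular x (aᗮ ⊓ (a ⊔ x)) hx
  have hsup : a ⊔ x ≤ (xᗮ ⊓ aᗮ)ᗮ := by
    apply sup_le
    · have := ocompl_anti (xᗮ ⊓ aᗮ) aᗮ inf_le_right
      rwa [ocompl_ocompl] at this
    · have := ocompl_anti (xᗮ ⊓ aᗮ) xᗮ inf_le_left
      rwa [ocompl_ocompl] at this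
  have hbot : xᗮ ⊓ (aᗮ ⊓ (a ⊔ x)) = ⊥ := by
    apply le_antisymm _ bot_le
    have h1 : xᗮ ⊓ (aᗮ ⊓ (a ⊔ x)) ≤ (xᗮ ⊓ aᗮ) ⊓ (xᗮ ⊓ aᗮ)ᗮ := by
      apply le_inf
      · exact le_inf inf_le_left (le_trans inf_le_right inf_le_left)
      · exact le_trans (le_trans inf_le_right inf_le_right)
          (le_trans hsup (le_refl _))
    calc xᗮ ⊓ (aᗮ ⊓ (a ⊔ x)) ≤ (xᗮ ⊓ aᗮ) ⊓ (xᗮ ⊓ aᗮ)ᗮ := h1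
      _ = ⊥ := inf_ocompl _
  rw [hom, hbot, sup_bot_eq]

lemma sup_inf_sup_le {a x y : α} (hx : x ≤ aᗮ) (hy : y ≤ aᗮ) :
    (a ⊔ x) ⊓ (a ⊔ y) ≤ a ⊔ (x ⊓ y) := by
  set z := (a ⊔ x) ⊓ (a ⊔ y) with hz
  have ha : a ≤ z := le_inf le_sup_left le_sup_left
  have hom := orthomodular a z ha
  have h1 : aᗮ ⊓ z ≤ x ⊓ y := by
    apply le_inf
    · have : aᗮ ⊓ z ≤ aᗮ ⊓ (a ⊔ x) := inf_le_inf_left _ (inf_le_left)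
      rwa [inf_compl_sup_eq hx] at this
    · have : aᗮ ⊓ z ≤ aᗮ ⊓ (a ⊔ y) := inf_le_inf_left _ (inf_le_right)
      rwa [inf_compl_sup_eq hy] at this
  calc z = a ⊔ (aᗮ ⊓ z) := hom
    _ ≤ a ⊔ (x ⊓ y) := sup_le_sup_left h1 _

end Aux

theorem mayetEA_equiv_3OA {α : Type*} [OrthomodularLattice α] :
    (∀ a b c d e : α, a ≤ bᗮ → c ≤ dᗮ → d ≤ eᗮ → c ≤ eᗮ →
      (a ⊔ b) ⊓ (c ⊔ d ⊔ e) ≤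
        a ⊔ (b ⊓ (e ⊔ ((a ⊔ c ⊔ d) ⊓ (b ⊔ e)))
               ⊓ (d ⊔ ((a ⊔ c ⊔ e) ⊓ (b ⊔ d)))
               ⊓ (c ⊔ ((a ⊔ d ⊔ e) ⊓ (b ⊔ c))))) ↔
    (∀ a b c d : α, a ≤ bᗮ → c ≤ dᗮ →
      (a ⊔ b) ⊓ (c ⊔ d) ≤ a ⊔ (b ⊓ (c ⊔ ((a ⊔ d) ⊓ (b ⊔ c))))) := by
  constructor
  · intro H a b c d hab hcd
    have htop : ∀ x : α, x ≤ (⊥ : α)ᗮ := fun x => by rw [ocompl_bot]; exact le_top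
    have := H a b c d ⊥ hab hcd (htop d) (htop c)
    simp only [sup_bot_eq, bot_sup_eq] at this
    refine le_trans this (sup_le_sup_left ?_ _)
    exact le_inf (le_trans inf_le_left (le_trans inf_le_left inf_le_left)) inf_le_right
  · intro H a b c d e hab hcd hde hce
    have hba : b ≤ aᗮ := ortho_symm hab
    have hdc : d ≤ cᗮ := ortho_symm hcd
    have hed : e ≤ dᗮ := ortho_symm hde
    have hec : e ≤ cᗮ := ortho_symm hce
    -- three applications of 3OA
    have h3 : (a ⊔ b) ⊓ (c ⊔ d ⊔ e) ≤ a ⊔ (b ⊓ (e ⊔ ((a ⊔ (c ⊔ d)) ⊓ (b ⊔ e)))) := by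
      have he : e ≤ (c ⊔ d)ᗮ := ortho_symm (sup_le hce hde)
      have := H a b e (c ⊔ d) hab he
      have heq : e ⊔ (c ⊔ d) = c ⊔ d ⊔ e := sup_comm _ _
      rwa [heq] at this
    have h2 : (a ⊔ b) ⊓ (c ⊔ d ⊔ e) ≤ a ⊔ (b ⊓ (d ⊔ ((a ⊔ (c ⊔ e)) ⊓ (b ⊔ d)))) := by
      have hd : d ≤ (c ⊔ e)ᗮ := ortho_symm (sup_le hcd hed)
      have := H a b d (c ⊔ e) hab hd
      have heq : d ⊔ (c ⊔ e) = c ⊔ d ⊔ e := by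
        rw [sup_comm d (c ⊔ e), sup_assoc, sup_comm e d, ← sup_assoc]
      rwa [heq] at this
    have h1 : (a ⊔ b) ⊓ (c ⊔ d ⊔ e) ≤ a ⊔ (b ⊓ (c ⊔ ((a ⊔ (d ⊔ e)) ⊓ (b ⊔ c)))) := by
      have hc : c ≤ (d ⊔ e)ᗮ := ortho_symm (sup_le hdc hec)
      have := H a b c (d ⊔ e) hab hc
      rwa [← sup_assoc] at this
    rw [← sup_assoc a c d] at h3
    rw [← sup_assoc a c e] at h2
    rw [← sup_assoc a d e] at h1
    set t3 := e ⊔ ((a ⊔ c ⊔ d) ⊓ (b ⊔ e))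
    set t2 := d ⊔ ((a ⊔ c ⊔ e) ⊓ (b ⊔ d))
    set t1 := c ⊔ ((a ⊔ d ⊔ e) ⊓ (b ⊔ c))
    have key32 : (a ⊔ b ⊓ t3) ⊓ (a ⊔ b ⊓ t2) ≤ a ⊔ (b ⊓ t3 ⊓ (b ⊓ t2)) :=
      sup_inf_sup_le (le_trans inf_le_left hba) (le_trans inf_le_left hba)
    have key1 : (a ⊔ (b ⊓ t3 ⊓ (b ⊓ t2))) ⊓ (a ⊔ b ⊓ t1) ≤ a ⊔ (b ⊓ t3 ⊓ (b ⊓ t2) ⊓ (b ⊓ t1)) :=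
      sup_inf_sup_le (le_trans inf_le_left (le_trans inf_le_left hba))
        (le_trans inf_le_left hba)
    have step : (a ⊔ b) ⊓ (c ⊔ d ⊔ e) ≤ a ⊔ (b ⊓ t3 ⊓ (b ⊓ t2) ⊓ (b ⊓ t1)) := by
      refine le_trans (le_inf (le_inf h3 h2) h1) (le_trans (inf_le_inf_right _ key32) key1)
    refine le_trans step (sup_le_sup_left ?_ _)
    refine le_inf (le_inf ?_ ?_) ?_
    · exact le_trans inf_le_left inf_le_left
    · exact le_trans inf_le_left (le_trans inf_le_right inf_le_right)
    · exact le_trans inf_le_right inf_le_right
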